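/- Let A be a commutative ring, I a set, R = A[(X_i)_{i∈I}] the polynomial ring, and 𝔞 ⊆ R a finitely generated monomial ideal. Then Γ_𝔞 = Γ_{⌊𝔞⌋}, i.e., for every R-module M and every x ∈ M there exists n ∈ ℕ with 𝔞^n ⊆ Ann_R(x) if and only if there exists n ∈ ℕ with ⌊𝔞⌋^n ⊆ Ann_R(x). (Proposition 2.10 a).) -/

import Mathlib

open MvPolynomial

/-- `suppInd μ` is the characteristic function of the support of `μ`,
so that `X^(suppInd μ) = ∏_{i : μ i > 0} X i`. -/
noncomputable def suppInd {I : Type v} (μ : I →₀ ℕ) : I →₀ ℕ :=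
  μ.mapRange (fun n => if n = 0 then 0 else 1) (by simp)

/-- A monomial ideal of `A[(X_i)_{i ∈ I}]` is an ideal generated by a set of monomials. -/
def IsMonomialIdeal {A : Type u} [CommRing A] {I : Type v}
    (𝔞 : Ideal (MvPolynomial I A)) : Prop :=
  ∃ E : Set (I →₀ ℕ), 𝔞 = Ideal.span ((fun μ => monomial μ (1 : A)) '' E)

/-- `⌊𝔞⌋` is the ideal generated by the monomials `X^(suppInd μ)` for all monomials
`X^μ ∈ 𝔞`. -/
noncomputable def mvFloor {A : Type u} [CommRing A] {I : Type v}
    (𝔞 : Ideal (MvPolynomial I A)) : Ideal (MvPolynomial I A) :=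
  Ideal.span {f | ∃ μ : I →₀ ℕ, monomial μ (1 : A) ∈ 𝔞 ∧ f = monomial (suppInd μ) (1 : A)}

/-!
Every monomial `X^μ` is a multiple of `X^(suppInd μ)`, and `X^(suppInd μ)` has a power in the
ideal generated by `X^μ`; hence `𝔞 ≤ ⌊𝔞⌋ ≤ √𝔞`. If `𝔞` is generated by finitely many monomials
`X^μ`, then `⌊𝔞⌋` is generated by the finitely many `X^(suppInd μ)`, so some power of `⌊𝔞⌋` lies
in `𝔞`. Thus the powers of `𝔞` and of `⌊𝔞⌋` are cofinal in each other.
-/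

section suppInd

variable {I : Type*}

lemma suppInd_le (μ : I →₀ ℕ) : suppInd μ ≤ μ := fun i => by
  simp only [suppInd, Finsupp.mapRange_apply]
  split_ifs <;> omega

lemma suppInd_mono {μ ν : I →₀ ℕ} (h : μ ≤ ν) : suppInd μ ≤ suppInd ν := fun i => by
  have := h i
  simp only [suppInd, Finsupp.mapRange_apply]
  split_ifs <;> omega

lemma le_degree_smul_suppInd (μ : I →₀ ℕ) : μ ≤ μ.degree • suppInd μ := fun i => by
  have := Finsupp.le_degree i μ
  simp only [suppInd, Finsupp.smul_apply, Finsupp.mapRange_apply, smul_eq_mul]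
  split_ifs with h <;> simp [h, this]

end suppInd

lemma Ideal.exists_pow_le_iff_of_le_of_le_radical {R : Type*} [CommSemiring R] {𝔞 𝔟 J : Ideal R}
    (h𝔞𝔟 : 𝔞 ≤ 𝔟) (h𝔟 : 𝔟 ≤ 𝔞.radical) (hfg : 𝔟.FG) :
    (∃ n : ℕ, 𝔞 ^ n ≤ J) ↔ ∃ n : ℕ, 𝔟 ^ n ≤ J := by
  obtain ⟨m, hm⟩ := Ideal.exists_pow_le_of_le_radical_of_fg h𝔟 hfg
  constructor
  · rintro ⟨n, hn⟩
    refine ⟨m * n, ?_⟩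
    calc 𝔟 ^ (m * n) = (𝔟 ^ m) ^ n := pow_mul 𝔟 m n
      _ ≤ 𝔞 ^ n := Ideal.pow_right_mono hm n
      _ ≤ J := hn
  · rintro ⟨n, hn⟩
    exact ⟨n, (Ideal.pow_right_mono h𝔞𝔟 n).trans hn⟩

section MonomialIdeal

variable {A : Type*} [CommRing A] {I : Type*}

lemma monomial_one_dvd_monomial_one {μ ν : I →₀ ℕ} (h : μ ≤ ν) :
    monomial μ (1 : A) ∣ monomial ν 1 :=
  monomial_dvd_monomial.mpr ⟨Or.inr h, one_dvd _⟩

lemma monomial_suppInd_mem_radical {J : Ideal (MvPolynomial I A)} {μ : I →₀ ℕ}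
    (hμ : monomial μ (1 : A) ∈ J) : monomial (suppInd μ) (1 : A) ∈ J.radical :=
  ⟨μ.degree, by
    rw [monomial_pow, one_pow]
    exact J.mem_of_dvd (monomial_one_dvd_monomial_one (le_degree_smul_suppInd μ)) hμ⟩

lemma mvFloor_le_radical (𝔞 : Ideal (MvPolynomial I A)) : mvFloor 𝔞 ≤ 𝔞.radical :=
  Ideal.span_le.mpr <| by
    rintro _ ⟨μ, hμ, rfl⟩
    exact monomial_suppInd_mem_radical hμ

lemma mvFloor_span_monomial (E : Set (I →₀ ℕ)) :
    mvFloor (Ideal.span ((fun μ => monomial μ (1 : A)) '' E)) =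
      Ideal.span ((fun μ => monomial (suppInd μ) (1 : A)) '' E) := by
  -- If `1 = 0`, the support of `monomial ν 1` is empty and `mem_ideal_span_monomial_image` is vacuous.
  nontriviality A
  apply le_antisymm
  · refine Ideal.span_le.mpr ?_
    rintro _ ⟨ν, hν, rfl⟩
    obtain ⟨μ, hμE, hμν⟩ := mem_ideal_span_monomial_image.mp hν ν
      (by classical simp [coeff_monomial])
    exact Ideal.mem_of_dvd _ (monomial_one_dvd_monomial_one (suppInd_mono hμν))
      (Ideal.subset_span ⟨μ, hμE, rfl⟩)
  · refine Ideal.span_le.mpr ?_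
    rintro _ ⟨μ, hμE, rfl⟩
    exact Ideal.subset_span ⟨μ, Ideal.subset_span ⟨μ, hμE, rfl⟩, rfl⟩

lemma IsMonomialIdeal.le_mvFloor {𝔞 : Ideal (MvPolynomial I A)} (h : IsMonomialIdeal 𝔞) :
    𝔞 ≤ mvFloor 𝔞 := by
  obtain ⟨E, rfl⟩ := h
  rw [mvFloor_span_monomial, Ideal.span_le]
  rintro _ ⟨μ, hμE, rfl⟩
  exact Ideal.mem_of_dvd _ (monomial_one_dvd_monomial_one (suppInd_le μ))
    (Ideal.subset_span ⟨μ, hμE, rfl⟩)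

lemma IsMonomialIdeal.exists_finset_of_fg {𝔞 : Ideal (MvPolynomial I A)}
    (h : IsMonomialIdeal 𝔞) (hfg : 𝔞.FG) :
    ∃ E : Finset (I →₀ ℕ), 𝔞 = Ideal.span ((fun μ => monomial μ (1 : A)) '' E) := by
  classical
  obtain ⟨E, rfl⟩ := h
  obtain ⟨s, hsE, hspan⟩ := (Submodule.fg_span_iff_fg_span_finset_subset _).mp hfg
  obtain ⟨E', -, rfl⟩ := Finset.subset_set_image_iff.mp hsE
  exact ⟨E', by rw [← Finset.coe_image]; exact hspan⟩

lemma IsMonomialIdeal.mvFloor_fg {𝔞 : Ideal (MvPolynomial I A)} (h : IsMonomialIdeal 𝔞)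
    (hfg : 𝔞.FG) : (mvFloor 𝔞).FG := by
  obtain ⟨E, rfl⟩ := h.exists_finset_of_fg hfg
  rw [mvFloor_span_monomial]
  exact Submodule.fg_span (E.finite_toSet.image _)

end MonomialIdeal

/-- (Proposition 2.10 a)): for a finitely generated monomial ideal
`𝔞` of `R = A[(X_i)_{i ∈ I}]`, the torsion functors `Γ_𝔞` and `Γ_⌊𝔞⌋` coincide. -/
theorem torsion_eq_torsion_floor {A : Type u} [CommRing A] {I : Type v}
    (𝔞 : Ideal (MvPolynomial I A)) (h : IsMonomialIdeal 𝔞) (hfg : 𝔞.FG) :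
    ∀ (M : Type (max u v)) [AddCommGroup M] [Module (MvPolynomial I A) M] (x : M),
      (∃ n : ℕ, 𝔞 ^ n ≤ Ideal.torsionOf (MvPolynomial I A) M x) ↔
        (∃ n : ℕ, (mvFloor 𝔞) ^ n ≤ Ideal.torsionOf (MvPolynomial I A) M x) := fun _ _ _ _ =>
  Ideal.exists_pow_le_iff_of_le_of_le_radical h.le_mvFloor (mvFloor_le_radical 𝔞)
    (h.mvFloor_fg hfg)
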